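/- With λ̄ and ρ̄ as defined, if G is a short game not equal to an integer and n is an integer with n < λ̄(G), then there exists a Left option G^L of G such that n ≤ G^L. -/

import Mathlib

noncomputable section

namespace SetTheory

/-- Pre-games (removed from Mathlib; restored with their December 2024 definition). -/
inductive PGame.{u} : Type (u + 1)
  | mk : ∀ α β : Type u, (α → PGame) → (β → PGame) → PGame

namespace PGame

def LeftMoves.{u} : PGame.{u} → Type u
  | mk l _ _ _ => l

def RightMoves.{u} : PGame.{u} → Type u
  | mk _ r _ _ => r

def moveLeft.{u} : ∀ g : PGame.{u}, LeftMoves g → PGame.{u}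
  | mk _ _ L _ => L

def moveRight.{u} : ∀ g : PGame.{u}, RightMoves g → PGame.{u}
  | mk _ _ _ R => R

instance instZeroPGame.{u} : Zero PGame.{u} := ⟨⟨PEmpty, PEmpty, PEmpty.elim, PEmpty.elim⟩⟩

instance instOnePGame.{u} : One PGame.{u} := ⟨⟨PUnit, PEmpty, fun _ => 0, PEmpty.elim⟩⟩

/-- The pair `(x ≤ y, y ≤ x)`, with `x ≤ y ↔ (∀ i, ¬ y ≤ xL i) ∧ ∀ j, ¬ yR j ≤ x`. -/
def leAux.{u} (x : PGame.{u}) : PGame.{u} → Prop × Prop :=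
  PGame.rec (motive := fun _ => PGame.{u} → Prop × Prop)
    (fun _ _ _ _ IHxl IHxr y =>
      PGame.rec (motive := fun _ => Prop × Prop)
        (fun yl yr yL yR IHyl IHyr =>
          ((∀ i, ¬ (IHxl i (mk yl yr yL yR)).2) ∧ (∀ j, ¬ (IHyr j).2),
           (∀ i, ¬ (IHyl i).1) ∧ (∀ j, ¬ (IHxr j (mk yl yr yL yR)).1))) y) x

instance instLEPGame.{u} : LE PGame.{u} := ⟨fun x y => (leAux x y).1⟩

theorem leAux_mk.{u} {xl xr yl yr : Type u} {xL : xl → PGame.{u}} {xR : xr → PGame.{u}}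
    {yL : yl → PGame.{u}} {yR : yr → PGame.{u}} :
    leAux (mk xl xr xL xR) (mk yl yr yL yR) =
      ((∀ i, ¬ (leAux (xL i) (mk yl yr yL yR)).2) ∧ (∀ j, ¬ (leAux (mk xl xr xL xR) (yR j)).2),
       (∀ i, ¬ (leAux (mk xl xr xL xR) (yL i)).1) ∧ (∀ j, ¬ (leAux (xR j) (mk yl yr yL yR)).1)) :=
  rfl

theorem leAux_swap.{u} (x y : PGame.{u}) :
    (leAux x y).2 = (leAux y x).1 ∧ (leAux y x).2 = (leAux x y).1 := by
  induction x generalizing y with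
  | mk xl xr xL xR IHxl IHxr =>
  induction y with
  | mk yl yr yL yR IHyl IHyr =>
  constructor <;>
  simp only [leAux_mk, fun i => (IHyl i).2, fun j y => (IHxr j y).2, fun i y => (IHxl i y).1,
    fun j => (IHyr j).1]

theorem leAux_snd.{u} (x y : PGame.{u}) : (leAux x y).2 = (leAux y x).1 :=
  (leAux_swap x y).1

theorem le_iff_moves.{u} {x y : PGame.{u}} :
    x ≤ y ↔ (∀ i, ¬ y ≤ x.moveLeft i) ∧ ∀ j, ¬ y.moveRight j ≤ x := by
  cases x with
  | mk xl xr xL xR =>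
  cases y with
  | mk yl yr yL yR =>
  exact and_congr
    (forall_congr' fun i => not_congr (Iff.of_eq (leAux_snd (xL i) (mk yl yr yL yR))))
    (forall_congr' fun j => not_congr (Iff.of_eq (leAux_snd (mk xl xr xL xR) (yR j))))

theorem pgLeRefl.{u} (x : PGame.{u}) : x ≤ x := by
  induction x with
  | mk xl xr xL xR IHl IHr =>
    rw [le_iff_moves]
    refine ⟨fun i h => ?_, fun j h => ?_⟩
    · exact (le_iff_moves.1 h).1 i (IHl i)
    · exact (le_iff_moves.1 h).2 j (IHr j)

theorem pgLeTransAux.{u} {x y z : PGame.{u}}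
    (h₁ : ∀ {i}, y ≤ z → z ≤ x.moveLeft i → y ≤ x.moveLeft i)
    (h₂ : ∀ {j}, z.moveRight j ≤ x → x ≤ y → z.moveRight j ≤ y) (hxy : x ≤ y) (hyz : y ≤ z) :
    x ≤ z :=
  le_iff_moves.2 ⟨fun i h => (le_iff_moves.1 hxy).1 i (h₁ hyz h),
    fun j h => (le_iff_moves.1 hyz).2 j (h₂ h hxy)⟩

theorem pgLeTransAll.{u} (x y z : PGame.{u}) :
    (x ≤ y → y ≤ z → x ≤ z) ∧ (y ≤ z → z ≤ x → y ≤ x) ∧ (z ≤ x → x ≤ y → z ≤ y) := by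
  induction x generalizing y z with
  | mk xl xr xL xR IHxl IHxr =>
  induction y generalizing z with
  | mk yl yr yL yR IHyl IHyr =>
  induction z with
  | mk zl zr zL zR IHzl IHzr =>
  exact ⟨pgLeTransAux (fun {i} => (IHxl i _ _).2.1) (fun {j} => (IHzr j).2.2),
    pgLeTransAux (fun {i} => (IHyl i _).2.2) (fun {j} => (IHxr j _ _).1),
    pgLeTransAux (fun {i} => (IHzl i).1) (fun {j} => (IHyr j _).2.1)⟩

theorem pgLeTrans.{u} {x y z : PGame.{u}} (h₁ : x ≤ y) (h₂ : y ≤ z) : x ≤ z :=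
  (pgLeTransAll x y z).1 h₁ h₂

def Equiv.{u} (x y : PGame.{u}) : Prop := x ≤ y ∧ y ≤ x

instance setoid.{u} : Setoid PGame.{u} :=
  ⟨Equiv, ⟨fun x => ⟨pgLeRefl x, pgLeRefl x⟩, fun h => ⟨h.2, h.1⟩,
    fun h₁ h₂ => ⟨pgLeTrans h₁.1 h₂.1, pgLeTrans h₂.2 h₁.2⟩⟩⟩

instance instAddPGame.{u} : Add PGame.{u} :=
  ⟨fun x y =>
    PGame.rec (motive := fun _ => PGame.{u} → PGame.{u})
      (fun xl xr _ _ IHxl IHxr y =>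
        PGame.rec (motive := fun _ => PGame.{u})
          (fun yl yr yL yR IHyl IHyr =>
            mk (xl ⊕ yl) (xr ⊕ yr) (Sum.elim (fun i => IHxl i (mk yl yr yL yR)) IHyl)
              (Sum.elim (fun i => IHxr i (mk yl yr yL yR)) IHyr)) y) x y⟩

def neg.{u} : PGame.{u} → PGame.{u}
  | ⟨l, r, L, R⟩ => ⟨r, l, fun i => neg (R i), fun i => neg (L i)⟩

instance instNegPGame.{u} : Neg PGame.{u} := ⟨neg⟩

instance instSubPGame.{u} : Sub PGame.{u} := ⟨fun x y => x + -y⟩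

def powHalf.{u} : ℕ → PGame.{u}
  | 0 => 1
  | n + 1 => ⟨PUnit, PUnit, fun _ => 0, fun _ => powHalf n⟩

inductive Short.{u} : PGame.{u} → Type (u + 1)
  | mk : ∀ {α β : Type u} {L : α → PGame.{u}} {R : β → PGame.{u}} (_ : ∀ i : α, Short (L i))
      (_ : ∀ j : β, Short (R j)) [Fintype α] [Fintype β], Short ⟨α, β, L, R⟩

attribute [class] Short

end PGame

/-- Games: pre-games modulo equivalence. -/
abbrev Game.{u} : Type (u + 1) := Quotient PGame.setoid.{u}

namespace Game

instance instLEGame.{u} : LE Game.{u} :=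
  ⟨Quotient.lift₂ (fun x y : PGame.{u} => x ≤ y) (fun _ _ _ _ h₁ h₂ =>
    propext ⟨fun h => PGame.pgLeTrans (PGame.pgLeTrans (And.right h₁) h) (And.left h₂),
      fun h => PGame.pgLeTrans (PGame.pgLeTrans (And.left h₁) h) (And.right h₂)⟩)⟩

instance instZeroGame.{u} : Zero Game.{u} := ⟨⟦0⟧⟩

instance instOneGame.{u} : One Game.{u} := ⟨⟦1⟧⟩

instance instAddGame.{u} : Add Game.{u} := ⟨fun a b => ⟦a.out + b.out⟧⟩

instance instNegGame.{u} : Neg Game.{u} := ⟨fun a => ⟦-a.out⟧⟩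

instance instSMulIntGame.{u} : SMul ℤ Game.{u} := ⟨zsmulRec nsmulRec⟩

end Game

end SetTheory

end

open SetTheory PGame Classical

noncomputable section

namespace Temper

universe u

/-- `q` is a dyadic rational. -/
def IsDyadic (q : ℚ) : Prop := ∃ (k : ℤ) (m : ℕ), q = (k : ℚ) / 2 ^ m

/-- Maximum of a set of rationals (junk value if none). -/
def qSup (s : Set ℚ) : ℚ := if h : ∃ a, IsGreatest s a then h.choose else 0

/-- Minimum of a set of rationals (junk value if none). -/
def qInf (s : Set ℚ) : ℚ := if h : ∃ a, IsLeast s a then h.choose else 0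

/-- Maximum of a set of integers (junk value if none). -/
def zSup (s : Set ℤ) : ℤ := if h : ∃ a, IsGreatest s a then h.choose else 0

/-- Minimum of a set of integers (junk value if none). -/
def zInf (s : Set ℤ) : ℤ := if h : ∃ a, IsLeast s a then h.choose else 0

/-- `n`-fold sum of a pregame. -/
def nsmulP : ℕ → PGame.{u} → PGame.{u}
  | 0, _ => 0
  | n + 1, x => nsmulP n x + x

/-- `k`-fold sum of a pregame, for an integer `k`. -/
def zsmulP (k : ℤ) (x : PGame.{u}) : PGame.{u} :=
  if 0 ≤ k then nsmulP k.toNat x else -(nsmulP (-k).toNat x)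

/-- A pregame representing the dyadic rational `q` (junk if `q` is not dyadic). -/
def dPGame (q : ℚ) : PGame.{u} := zsmulP q.num (PGame.powHalf (Nat.log 2 q.den))

/-- The game value of the dyadic rational `q`. -/
def dGame (q : ℚ) : Game.{u} := q.num • (⟦PGame.powHalf (Nat.log 2 q.den)⟧ : Game)

/-- The (value of the) pregame `G` is equal to an integer. -/
def EqInt (G : PGame.{u}) : Prop := ∃ n : ℤ, (⟦G⟧ : Game) = n • (1 : Game)

/-- The (value of the) pregame `G` is equal to a (dyadic rational) number. -/
def EqNum (G : PGame.{u}) : Prop := ∃ q : ℚ, IsDyadic q ∧ (⟦G⟧ : Game) = dGame q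

/-- The pair `(λ̄(G), ρ̄(G))`. -/
def lrBar : PGame.{u} → ℤ × ℤ
  | PGame.mk α β L R =>
    if h : EqInt (PGame.mk α β L R) then (h.choose, h.choose)
    else (zSup (Set.range fun i : α => (lrBar (L i)).2 + 1),
          zInf (Set.range fun j : β => (lrBar (R j)).1 - 1))

/-- `λ̄(G)`. -/
def lBar (G : PGame.{u}) : ℤ := (lrBar G).1

/-- `ρ̄(G)`. -/
def rBar (G : PGame.{u}) : ℤ := (lrBar G).2

/-- Left and Right stops of a pregame. -/
def stops : PGame.{u} → ℚ × ℚ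
  | PGame.mk α β L R =>
    if h : EqNum (PGame.mk α β L R) then (h.choose, h.choose)
    else (qSup (Set.range fun i : α => (stops (L i)).2),
          qInf (Set.range fun j : β => (stops (R j)).1))

/-- The Left stop `L(G)`. -/
def Lstop (G : PGame.{u}) : ℚ := (stops G).1

/-- The Right stop `R(G)`. -/
def Rstop (G : PGame.{u}) : ℚ := (stops G).2

/-- `G` is numberish: infinitesimally close to a number. -/
def Numberish (G : PGame.{u}) : Prop := Lstop G = Rstop G

/-- The data of temperature theory attached to a game: the walls `λ_t(G)`, `ρ_t(G)`
of the thermograph, the temperature `t(G)` (which is `⊥ = -∞` for integers), and the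
cooled games `G_t`. -/
structure ThermoData : Type (u + 1) where
  lam : ℚ → ℚ
  rho : ℚ → ℚ
  temp : WithBot ℚ
  cool : ℚ → PGame.{u}

/-- The standard temperature-theory recursion. -/
def thermo : PGame.{u} → ThermoData.{u}
  | PGame.mk α β L R =>
    if h : EqInt (PGame.mk α β L R) then
      { lam := fun _ => (h.choose : ℚ)
        rho := fun _ => (h.choose : ℚ)
        temp := ⊥
        cool := fun _ => dPGame (h.choose : ℚ) }
    else
      let lamT : ℚ → ℚ := fun t => qSup (Set.range fun i : α => (thermo (L i)).rho t - t)
      let rhoT : ℚ → ℚ := fun t => qInf (Set.range fun j : β => (thermo (R j)).lam t + t)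
      let tG : ℚ :=
        if h2 : ∃ t, IsLeast {t : ℚ | IsDyadic t ∧ lamT t = rhoT t} t then h2.choose else 0
      { lam := fun t => if t ≤ tG then lamT t else lamT tG
        rho := fun t => if t ≤ tG then rhoT t else lamT tG
        temp := (tG : WithBot ℚ)
        cool := fun t =>
          if t ≤ tG then
            PGame.mk α β (fun i => (thermo (L i)).cool t - dPGame t)
              (fun j => (thermo (R j)).cool t + dPGame t)
          else dPGame (lamT tG) }

/-- The wall `λ_t(G)`. -/
def lamW (G : PGame.{u}) (t : ℚ) : ℚ := (thermo G).lam t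

/-- The wall `ρ_t(G)`. -/
def rhoW (G : PGame.{u}) (t : ℚ) : ℚ := (thermo G).rho t

/-- The temperature `t(G)`. -/
def temp (G : PGame.{u}) : WithBot ℚ := (thermo G).temp

/-- The cooled game `G_t`. -/
def cool (G : PGame.{u}) (t : ℚ) : PGame.{u} := (thermo G).cool t

/-- `λ̃_t(G) = max_{G^L} (ρ_t(G^L) - t)`. -/
def lamTilde (G : PGame.{u}) (t : ℚ) : ℚ :=
  qSup (Set.range fun i => rhoW (G.moveLeft i) t - t)

/-- `ρ̃_t(G) = min_{G^R} (λ_t(G^R) + t)`. -/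
def rhoTilde (G : PGame.{u}) (t : ℚ) : ℚ :=
  qInf (Set.range fun j => lamW (G.moveRight j) t + t)

/-- The formal game `G̃_t = {(G^L)_t - t | (G^R)_t + t}`. -/
def tildeCool (G : PGame.{u}) (t : ℚ) : PGame.{u} :=
  PGame.mk G.LeftMoves G.RightMoves
    (fun i => cool (G.moveLeft i) t - dPGame t)
    (fun j => cool (G.moveRight j) t + dPGame t)

end Temper

namespace Temper

/-- A piecewise-linear function `ℚ → ℚ` with slopes in `A`, consisting of finitely many
segments (the first and last being half-lines) with dyadic breakpoints and intercepts. -/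
def IsTrajWith (A : Set ℚ) (f : ℚ → ℚ) : Prop :=
  ∃ (n : ℕ) (j a b : ℕ → ℚ),
    (∀ i, i < n → j i ≤ j (i + 1)) ∧
    (∀ i, i ≤ n → IsDyadic (j i)) ∧
    (∀ i, i ≤ n + 1 → a i ∈ A ∧ IsDyadic (b i)) ∧
    (∀ x, x ≤ j 0 → f x = a 0 * x + b 0) ∧
    (∀ i, i < n → ∀ x, j i ≤ x → x ≤ j (i + 1) → f x = a (i + 1) * x + b (i + 1)) ∧
    (∀ x, j n ≤ x → f x = a (n + 1) * x + b (n + 1))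

/-- A dyadic trajectory: slopes in `{-1, 0, 1}`. -/
def IsDyadicTrajectory (f : ℚ → ℚ) : Prop := IsTrajWith {-1, 0, 1} f

/-- `f` has a mast with mast value `c`: it is eventually constant equal to `c`. -/
def HasMastValue (f : ℚ → ℚ) (c : ℚ) : Prop :=
  ∃ x0 : ℚ, IsDyadic x0 ∧ ∀ x, x0 ≤ x → f x = c

end Temper

namespace Temper

universe u

/-- Canonical pregame for a natural number. -/
def natP : ℕ → PGame.{u}
  | 0 => 0
  | (k+1) => PGame.mk PUnit PEmpty (fun _ => natP k) PEmpty.elim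

/-- Canonical pregame for an integer. -/
def intP : ℤ → PGame.{u}
  | Int.ofNat k => natP k
  | Int.negSucc k => -natP (k+1)

theorem natP_right_empty (k : ℕ) : IsEmpty (natP.{u} k).RightMoves := by
  cases k <;> exact ⟨fun x => x.elim⟩

theorem lf_of_le_mL {x y : PGame.{u}} {i : y.LeftMoves} (h : x ≤ y.moveLeft i) : ¬ y ≤ x :=
  fun h' => (le_iff_moves.1 h').1 i h

theorem lf_of_mR_le {x y : PGame.{u}} {j : x.RightMoves} (h : x.moveRight j ≤ y) : ¬ y ≤ x :=
  fun h' => (le_iff_moves.1 h').2 j h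

theorem eqvL {x y : PGame.{u}} (h : x ≈ y) : x ≤ y := And.left h

theorem eqvR {x y : PGame.{u}} (h : x ≈ y) : y ≤ x := And.right h

theorem quotEq {x y : PGame.{u}} (h1 : x ≤ y) (h2 : y ≤ x) : (⟦x⟧ : Game) = ⟦y⟧ :=
  Quotient.sound ⟨h1, h2⟩

theorem le_iff_game_le {x y : PGame.{u}} : x ≤ y ↔ (⟦x⟧ : Game) ≤ ⟦y⟧ := Iff.rfl

theorem neg_mk' {l r : Type u} (L : l → PGame.{u}) (R : r → PGame.{u}) :
    -(PGame.mk l r L R) = PGame.mk r l (fun i => -(R i)) (fun i => -(L i)) := rfl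

theorem negZero : -(0 : PGame.{u}) = 0 := by
  show PGame.mk PEmpty PEmpty (fun i => -(PEmpty.elim i : PGame.{u}))
      (fun i => -(PEmpty.elim i : PGame.{u})) = PGame.mk PEmpty PEmpty PEmpty.elim PEmpty.elim
  exact congrArg₂ (PGame.mk PEmpty PEmpty) (funext fun i => i.elim) (funext fun i => i.elim)

theorem negLeAll (x y : PGame.{u}) : (-x ≤ -y ↔ y ≤ x) ∧ (-y ≤ -x ↔ x ≤ y) := by
  induction x generalizing y with
  | mk xl xr xL xR IHxl IHxr =>
  induction y with
  | mk yl yr yL yR IHyl IHyr =>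
  exact ⟨le_iff_moves.trans (and_comm.trans ((and_congr
      (forall_congr' fun j => not_congr (IHyl j).2)
      (forall_congr' fun i => not_congr (IHxr i _).2)).trans
        (le_iff_moves (x := PGame.mk yl yr yL yR) (y := PGame.mk xl xr xL xR)).symm)),
    le_iff_moves.trans (and_comm.trans ((and_congr
      (forall_congr' fun j => not_congr (IHxl j _).1)
      (forall_congr' fun i => not_congr (IHyr i).1)).trans
        (le_iff_moves (x := PGame.mk xl xr xL xR) (y := PGame.mk yl yr yL yR)).symm))⟩

theorem addRightAll (x y z : PGame.{u}) :
    (x ≤ y → x + z ≤ y + z) ∧ (¬ y ≤ x → ¬ y + z ≤ x + z) := by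
  induction x generalizing y z with
  | mk xl xr xL xR IHxl IHxr =>
  induction y generalizing z with
  | mk yl yr yL yR IHyl IHyr =>
  induction z with
  | mk zl zr zL zR IHzl IHzr =>
  constructor
  · intro h
    have h' := le_iff_moves.1 h
    refine le_iff_moves.2 ⟨?_, ?_⟩
    · rintro (i | k)
      · exact (IHxl i (PGame.mk yl yr yL yR) (PGame.mk zl zr zL zR)).2 (h'.1 i)
      · intro hc
        have h1 := (IHzl k).1 h
        exact lf_of_le_mL (y := PGame.mk yl yr yL yR + PGame.mk zl zr zL zR) (i := Sum.inr k)
          (pgLeRefl (PGame.mk yl yr yL yR + zL k)) (pgLeTrans hc h1)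
    · rintro (j | k)
      · exact (IHyr j (PGame.mk zl zr zL zR)).2 (h'.2 j)
      · intro hc
        have h1 := (IHzr k).1 h
        exact lf_of_mR_le (x := PGame.mk xl xr xL xR + PGame.mk zl zr zL zR) (j := Sum.inr k)
          (pgLeTrans h1 hc) (pgLeRefl _)
  · intro h hc
    apply h
    refine le_iff_moves.2 ⟨fun i hi => ?_, fun j hj => ?_⟩
    · exact lf_of_le_mL (y := PGame.mk yl yr yL yR + PGame.mk zl zr zL zR) (i := Sum.inl i)
        ((IHyl i (PGame.mk zl zr zL zR)).1 hi) hc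
    · exact lf_of_mR_le (x := PGame.mk xl xr xL xR + PGame.mk zl zr zL zR) (j := Sum.inl j)
        ((IHxr j (PGame.mk yl yr yL yR) (PGame.mk zl zr zL zR)).1 hj) hc

theorem addLeftAll (x y z : PGame.{u}) :
    (x ≤ y → z + x ≤ z + y) ∧ (¬ y ≤ x → ¬ z + y ≤ z + x) := by
  induction x generalizing y z with
  | mk xl xr xL xR IHxl IHxr =>
  induction y generalizing z with
  | mk yl yr yL yR IHyl IHyr =>
  induction z with
  | mk zl zr zL zR IHzl IHzr =>
  constructor
  · intro h
    have h' := le_iff_moves.1 h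
    refine le_iff_moves.2 ⟨?_, ?_⟩
    · rintro (k | i)
      · intro hc
        have h1 := (IHzl k).1 h
        exact lf_of_le_mL (y := PGame.mk zl zr zL zR + PGame.mk yl yr yL yR) (i := Sum.inl k)
          (pgLeRefl (zL k + PGame.mk yl yr yL yR)) (pgLeTrans hc h1)
      · exact (IHxl i (PGame.mk yl yr yL yR) (PGame.mk zl zr zL zR)).2 (h'.1 i)
    · rintro (k | j)
      · intro hc
        have h1 := (IHzr k).1 h
        exact lf_of_mR_le (x := PGame.mk zl zr zL zR + PGame.mk xl xr xL xR) (j := Sum.inl k)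
          (pgLeTrans h1 hc) (pgLeRefl _)
      · exact (IHyr j (PGame.mk zl zr zL zR)).2 (h'.2 j)
  · intro h hc
    apply h
    refine le_iff_moves.2 ⟨fun i hi => ?_, fun j hj => ?_⟩
    · exact lf_of_le_mL (y := PGame.mk zl zr zL zR + PGame.mk yl yr yL yR) (i := Sum.inr i)
        ((IHyl i (PGame.mk zl zr zL zR)).1 hi) hc
    · exact lf_of_mR_le (x := PGame.mk zl zr zL zR + PGame.mk xl xr xL xR) (j := Sum.inr j)
        ((IHxr j (PGame.mk yl yr yL yR) (PGame.mk zl zr zL zR)).1 hj) hc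

theorem addZeroAll (x : PGame.{u}) : x + 0 ≤ x ∧ x ≤ x + 0 := by
  induction x with
  | mk xl xr xL xR IHl IHr =>
  show PGame.mk xl xr xL xR + (PGame.mk PEmpty PEmpty PEmpty.elim PEmpty.elim : PGame.{u}) ≤ PGame.mk xl xr xL xR ∧
    PGame.mk xl xr xL xR ≤ PGame.mk xl xr xL xR + (PGame.mk PEmpty PEmpty PEmpty.elim PEmpty.elim : PGame.{u})
  constructor
  · refine le_iff_moves.2 ⟨?_, fun j hj => ?_⟩
    · rintro (i | e) hc
      · exact lf_of_le_mL (y := PGame.mk xl xr xL xR) (i := i) (pgLeRefl (xL i))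
          (pgLeTrans hc (IHl i).1)
      · exact PEmpty.elim e
    · exact lf_of_mR_le (x := PGame.mk xl xr xL xR + (PGame.mk PEmpty PEmpty PEmpty.elim PEmpty.elim : PGame.{u}))
        (j := Sum.inl j)
        (pgLeTrans (IHr j).1 hj) (pgLeRefl _)
  · refine le_iff_moves.2 ⟨fun i hi => ?_, ?_⟩
    · exact lf_of_le_mL (y := PGame.mk xl xr xL xR + (PGame.mk PEmpty PEmpty PEmpty.elim PEmpty.elim : PGame.{u}))
        (i := Sum.inl i)
        (pgLeTrans hi (IHl i).2) (pgLeRefl _)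
    · rintro (j | e) hc
      · exact lf_of_mR_le (x := PGame.mk xl xr xL xR) (j := j) (pgLeTrans (IHr j).2 hc)
          (pgLeRefl _)
      · exact PEmpty.elim e

theorem notAddOneLe (x : PGame.{u}) : ¬ x + 1 ≤ x := by
  cases x with
  | mk xl xr xL xR =>
    exact lf_of_le_mL (y := PGame.mk xl xr xL xR + 1) (i := Sum.inr PUnit.unit)
      (addZeroAll (PGame.mk xl xr xL xR)).2

theorem natNotLe (k : ℕ) : ¬ natP.{u} (k+1) ≤ natP k :=
  lf_of_le_mL (y := natP.{u} (k+1)) (i := PUnit.unit) (pgLeRefl (natP k))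

theorem natLe : ∀ k : ℕ, natP.{u} k ≤ natP (k+1)
  | 0 => le_iff_moves.2 ⟨fun i => PEmpty.elim i, fun j => PEmpty.elim j⟩
  | k+1 => le_iff_moves.2 ⟨fun _ hc => natNotLe (k+1) (pgLeTrans hc (natLe k)),
      fun j => PEmpty.elim j⟩

theorem natSucc (k : ℕ) : natP.{u} k + 1 ≤ natP (k+1) ∧ natP.{u} (k+1) ≤ natP k + 1 := by
  induction k with
  | zero =>
    constructor
    · refine le_iff_moves.2 ⟨?_, fun j => PEmpty.elim j⟩
      rintro (i | v) hc
      · exact PEmpty.elim i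
      · exact natNotLe 0 (pgLeTrans hc (addZeroAll (natP.{u} 0)).1)
    · refine le_iff_moves.2 ⟨fun _ => notAddOneLe (natP.{u} 0), ?_⟩
      rintro (j | j) <;> exact PEmpty.elim j
  | succ k IH =>
    constructor
    · refine le_iff_moves.2 ⟨?_, fun j => PEmpty.elim j⟩
      rintro (i | v) hc
      · exact natNotLe (k+1) (pgLeTrans hc IH.1)
      · exact natNotLe (k+1) (pgLeTrans hc (addZeroAll (natP.{u} (k+1))).1)
    · refine le_iff_moves.2 ⟨fun _ => notAddOneLe (natP.{u} (k+1)), ?_⟩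
      rintro (j | j) <;> exact PEmpty.elim j

theorem gameAddQuot (x y : PGame.{u}) : (⟦x⟧ : Game) + ⟦y⟧ = ⟦x + y⟧ := by
  have hx : Quotient.out (⟦x⟧ : Game) ≈ x := Quotient.exact (Quotient.out_eq _)
  have hy : Quotient.out (⟦y⟧ : Game) ≈ y := Quotient.exact (Quotient.out_eq _)
  show (⟦Quotient.out (⟦x⟧ : Game) + Quotient.out (⟦y⟧ : Game)⟧ : Game) = ⟦x + y⟧
  exact quotEq (pgLeTrans ((addRightAll _ _ _).1 (eqvL hx)) ((addLeftAll _ _ _).1 (eqvL hy)))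
    (pgLeTrans ((addRightAll _ _ _).1 (eqvR hx)) ((addLeftAll _ _ _).1 (eqvR hy)))

theorem gameNegQuot (x : PGame.{u}) : -(⟦x⟧ : Game) = ⟦-x⟧ := by
  have hx : Quotient.out (⟦x⟧ : Game) ≈ x := Quotient.exact (Quotient.out_eq _)
  show (⟦-Quotient.out (⟦x⟧ : Game)⟧ : Game) = ⟦-x⟧
  exact quotEq ((negLeAll _ _).1.2 (eqvR hx)) ((negLeAll _ _).1.2 (eqvL hx))

theorem quotNatP : ∀ k : ℕ, (⟦natP.{u} k⟧ : Game) = nsmulRec k (1 : Game.{u})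
  | 0 => rfl
  | k+1 => by
    show _ = nsmulRec k (1 : Game.{u}) + 1
    rw [← quotNatP k]
    show _ = (⟦natP.{u} k⟧ : Game) + ⟦1⟧
    rw [gameAddQuot]
    exact quotEq (natSucc k).2 (natSucc k).1

theorem quot_intP (n : ℤ) : (⟦intP.{u} n⟧ : Game) = n • (1 : Game) := by
  match n with
  | Int.ofNat k =>
    show (⟦natP.{u} k⟧ : Game) = nsmulRec k (1 : Game.{u})
    exact quotNatP k
  | Int.negSucc k =>
    show (⟦-natP.{u} (k+1)⟧ : Game) = -nsmulRec (k+1) (1 : Game.{u})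
    rw [← quotNatP (k+1), gameNegQuot]

theorem intStep (a : ℤ) : intP.{u} a ≤ intP (a+1) ∧ ¬ intP.{u} (a+1) ≤ intP a := by
  match a with
  | Int.ofNat k =>
    have e : (Int.ofNat k : ℤ) + 1 = Int.ofNat (k+1) := rfl
    rw [e]
    exact ⟨natLe k, natNotLe k⟩
  | Int.negSucc 0 =>
    have e : (Int.negSucc 0 : ℤ) + 1 = Int.ofNat 0 := by decide
    rw [e]
    show -natP.{u} 1 ≤ natP 0 ∧ ¬ natP.{u} 0 ≤ -natP 1
    have hz : natP.{u} 0 = -natP.{u} 0 := negZero.symm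
    rw [hz]
    exact ⟨(negLeAll _ _).1.2 (natLe 0), fun h => natNotLe 0 ((negLeAll _ _).1.1 h)⟩
  | Int.negSucc (k+1) =>
    have e : (Int.negSucc (k+1) : ℤ) + 1 = Int.negSucc k := by
      rw [Int.negSucc_eq, Int.negSucc_eq]
      push_cast
      ring
    rw [e]
    show -natP.{u} (k+2) ≤ -natP (k+1) ∧ ¬ -natP.{u} (k+1) ≤ -natP (k+2)
    exact ⟨(negLeAll _ _).1.2 (natLe (k+1)), fun h => natNotLe (k+1) ((negLeAll _ _).1.1 h)⟩

theorem intP_le_intP {a b : ℤ} (h : a ≤ b) : intP.{u} a ≤ intP b := by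
  obtain ⟨k, rfl⟩ : ∃ k : ℕ, b = a + k := ⟨(b - a).toNat, by omega⟩
  clear h
  induction k with
  | zero => rw [Nat.cast_zero, add_zero]; exact pgLeRefl _
  | succ k ih =>
    rw [Nat.cast_succ, ← add_assoc]
    exact pgLeTrans ih (intStep _).1

theorem intNotLe {a b : ℤ} (h : a < b) : ¬ intP.{u} b ≤ intP a := fun hc =>
  (intStep a).2 (pgLeTrans (intP_le_intP (show a + 1 ≤ b by omega)) hc)

theorem isEmpty_left_intP {n : ℤ} (h : n ≤ 0) : IsEmpty (intP.{u} n).LeftMoves := by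
  match n with
  | Int.ofNat k =>
    have e : Int.ofNat k = ((k : ℕ) : ℤ) := rfl
    have hk : k = 0 := by omega
    subst hk
    exact ⟨fun x => x.elim⟩
  | Int.negSucc k =>
    exact ⟨fun x => x.elim⟩

theorem isEmpty_right_intP {n : ℤ} (h : 0 ≤ n) : IsEmpty (intP.{u} n).RightMoves := by
  match n with
  | Int.ofNat k => exact natP_right_empty k
  | Int.negSucc k =>
    have e := Int.negSucc_eq k
    exact absurd h (by omega)

theorem intP_moveLeft {n : ℤ} (h : 1 ≤ n) (i : (intP.{u} n).LeftMoves) :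
    (intP.{u} n).moveLeft i = intP (n - 1) := by
  match n with
  | Int.ofNat (k+1) =>
    show natP k = intP (Int.ofNat (k+1) - 1)
    have e : (Int.ofNat (k+1) : ℤ) - 1 = Int.ofNat k := by
      show ((k+1 : ℕ) : ℤ) - 1 = ((k : ℕ) : ℤ)
      omega
    rw [e]
    rfl
  | Int.ofNat 0 =>
    exact absurd h (by decide)
  | Int.negSucc k =>
    have e := Int.negSucc_eq k
    exact absurd h (by omega)

theorem intP_moveRight {n : ℤ} (h : n ≤ -1) (j : (intP.{u} n).RightMoves) :
    (intP.{u} n).moveRight j = intP (n + 1) := by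
  match n with
  | Int.ofNat k =>
    have e : Int.ofNat k = ((k : ℕ) : ℤ) := rfl
    exact absurd h (by omega)
  | Int.negSucc 0 =>
    show -(natP 0) = intP (Int.negSucc 0 + 1)
    have e : (Int.negSucc 0 : ℤ) + 1 = Int.ofNat 0 := by decide
    rw [e]
    show -(0 : PGame) = 0
    exact negZero
  | Int.negSucc (k+1) =>
    show -(natP (k+1)) = intP (Int.negSucc (k+1) + 1)
    have e : (Int.negSucc (k+1) : ℤ) + 1 = Int.negSucc k := by
      rw [Int.negSucc_eq, Int.negSucc_eq]
      push_cast
      ring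
    rw [e]
    rfl

theorem zsmul_one_le {a b : ℤ} (h : a ≤ b) : a • (1 : Game.{u}) ≤ b • (1 : Game) := by
  rw [← quot_intP, ← quot_intP]
  exact intP_le_intP h

theorem zsmul_one_not_le {a b : ℤ} (h : a < b) : ¬ b • (1 : Game.{u}) ≤ a • (1 : Game) := by
  rw [← quot_intP, ← quot_intP]
  exact intNotLe h

theorem zsmul_one_inj {a b : ℤ} (h : a • (1 : Game.{u}) = b • (1 : Game)) : a = b := by
  rw [← quot_intP, ← quot_intP] at h
  have e := Quotient.exact h
  rcases lt_trichotomy a b with hab | hab | hab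
  · exact absurd (eqvR e) (intNotLe hab)
  · exact hab
  · exact absurd (eqvL e) (intNotLe hab)

/-- Constructor for `intP n ≤ G`. -/
theorem intP_le {n : ℤ} {G : PGame.{u}} (hR : ∀ j, ¬ G.moveRight j ≤ intP n)
    (hL : 1 ≤ n → ¬ G ≤ intP (n - 1)) : intP n ≤ G := by
  rw [le_iff_moves]
  refine ⟨fun i => ?_, hR⟩
  rcases le_or_gt n 0 with h | h
  · exact (isEmpty_left_intP h).elim i
  · rw [intP_moveLeft h i]
    exact hL h

/-- Constructor for `G ≤ intP n`. -/
theorem le_intP {n : ℤ} {G : PGame.{u}} (hL : ∀ i, ¬ intP n ≤ G.moveLeft i)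
    (hR : n ≤ -1 → ¬ intP (n + 1) ≤ G) : G ≤ intP n := by
  rw [le_iff_moves]
  refine ⟨hL, fun j => ?_⟩
  rcases le_or_gt 0 n with h | h
  · exact (isEmpty_right_intP h).elim j
  · rw [intP_moveRight (by omega) j]
    exact hR (by omega)

def shortFtL : ∀ {G : PGame.{u}}, G.Short → Fintype G.LeftMoves
  | _, @Short.mk _ _ _ _ _ _ f _ => f

def shortFtR : ∀ {G : PGame.{u}}, G.Short → Fintype G.RightMoves
  | _, @Short.mk _ _ _ _ _ _ _ f => f

def shortMoveL : ∀ {G : PGame.{u}}, G.Short → ∀ i, (G.moveLeft i).Short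
  | _, @Short.mk _ _ _ _ hL _ _ _, i => hL i

def shortMoveR : ∀ {G : PGame.{u}}, G.Short → ∀ j, (G.moveRight j).Short
  | _, @Short.mk _ _ _ _ _ hR _ _, j => hR j

theorem exists_isGreatest_of_finite {s : Set ℤ} (hf : s.Finite) (hn : s.Nonempty) :
    ∃ a, IsGreatest s a := by
  obtain ⟨a, ha, hmax⟩ := Set.exists_max_image s id hf hn
  exact ⟨a, ha, fun b hb => hmax b hb⟩

theorem exists_isLeast_of_finite {s : Set ℤ} (hf : s.Finite) (hn : s.Nonempty) :
    ∃ a, IsLeast s a := by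
  obtain ⟨a, ha, hmin⟩ := Set.exists_min_image s id hf hn
  exact ⟨a, ha, fun b hb => hmin b hb⟩

theorem isGreatest_zSup {s : Set ℤ} (h : ∃ a, IsGreatest s a) : IsGreatest s (zSup s) := by
  unfold zSup
  rw [dif_pos h]
  exact h.choose_spec

theorem isLeast_zInf {s : Set ℤ} (h : ∃ a, IsLeast s a) : IsLeast s (zInf s) := by
  unfold zInf
  rw [dif_pos h]
  exact h.choose_spec

theorem eqInt_val {G : PGame.{u}} (h : EqInt G) {m : ℤ} (hm : (⟦G⟧ : Game) = m • 1) :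
    h.choose = m := zsmul_one_inj (h.choose_spec.symm.trans hm)

theorem lBar_of_eqInt {G : PGame.{u}} (h : EqInt G) {m : ℤ} (hm : (⟦G⟧ : Game) = m • 1) :
    lBar G = m ∧ rBar G = m := by
  obtain ⟨α, β, L, R⟩ := G
  unfold lBar rBar
  rw [lrBar, dif_pos h]
  exact ⟨eqInt_val h hm, eqInt_val h hm⟩

theorem lBar_of_not {α β : Type u} {L : α → PGame.{u}} {R : β → PGame.{u}}
    (h : ¬ EqInt (PGame.mk α β L R)) :
    lBar (PGame.mk α β L R) = zSup (Set.range fun i : α => rBar (L i) + 1) ∧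
    rBar (PGame.mk α β L R) = zInf (Set.range fun j : β => lBar (R j) - 1) := by
  unfold lBar rBar
  rw [lrBar, dif_neg h]
  exact ⟨rfl, rfl⟩

/-- The six mutually-inductive statements. -/
def BigP (G : PGame.{u}) : Prop :=
  ∀ (_ : G.Short),
    (∀ n : ℤ, n ≤ rBar G → intP n ≤ G) ∧
    (∀ n : ℤ, lBar G ≤ n → G ≤ intP n) ∧
    (IsEmpty G.LeftMoves → EqInt G) ∧
    (IsEmpty G.RightMoves → EqInt G) ∧
    (∀ n : ℤ, ¬ EqInt G → n < lBar G → ∃ i, intP n ≤ G.moveLeft i) ∧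
    (∀ n : ℤ, ¬ EqInt G → rBar G < n → ∃ j, G.moveRight j ≤ intP n)

theorem bigP : ∀ G : PGame.{u}, BigP G := by
  intro G
  induction G with
  | mk α β L R ihL ihR =>
  intro hS
  haveI : (PGame.mk α β L R).Short := hS
  haveI fA : Fintype α := shortFtL hS
  haveI fB : Fintype β := shortFtR hS
  have hSL : ∀ i : α, (L i).Short := fun i => shortMoveL hS i
  have hSR : ∀ j : β, (R j).Short := fun j => shortMoveR hS j
  have ihBL : ∀ (i : α) (n : ℤ), n ≤ rBar (L i) → intP n ≤ L i :=
    fun i => ((ihL i) (hSL i)).1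
  have ihB'R : ∀ (j : β) (n : ℤ), lBar (R j) ≤ n → R j ≤ intP n :=
    fun j => ((ihR j) (hSR j)).2.1
  have ihAR : ∀ (j : β) (n : ℤ), ¬ EqInt (R j) → n < lBar (R j) →
      ∃ i', intP n ≤ (R j).moveLeft i' :=
    fun j => ((ihR j) (hSR j)).2.2.2.2.1
  have ihA'L : ∀ (i : α) (n : ℤ), ¬ EqInt (L i) → rBar (L i) < n →
      ∃ j', (L i).moveRight j' ≤ intP n :=
    fun i => ((ihL i) (hSL i)).2.2.2.2.2
  -- B : n ≤ rBar G → intP n ≤ G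
  have hB : ∀ n : ℤ, n ≤ rBar (PGame.mk α β L R) → intP n ≤ PGame.mk α β L R := by
    by_cases hInt : EqInt (PGame.mk α β L R)
    · intro n hn
      have h1 := (lBar_of_eqInt hInt hInt.choose_spec).2
      rw [le_iff_game_le, quot_intP, hInt.choose_spec]
      exact zsmul_one_le (by omega)
    · have hrB := (lBar_of_not hInt).2
      have key : ∀ j : β, rBar (PGame.mk α β L R) ≤ lBar (R j) - 1 := by
        intro j
        haveI : Nonempty β := ⟨j⟩
        have hfin : (Set.range fun j : β => lBar (R j) - 1).Finite := Set.finite_range _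
        have hne : (Set.range fun j : β => lBar (R j) - 1).Nonempty :=
          Set.range_nonempty (fun j : β => lBar (R j) - 1)
        have hleast := isLeast_zInf (exists_isLeast_of_finite hfin hne)
        rw [hrB]
        exact hleast.2 ⟨j, rfl⟩
      have hRstep : ∀ (n : ℤ) (j : β), n < lBar (R j) → ¬ R j ≤ intP n := by
        intro n j hlt
        by_cases hj : EqInt (R j)
        · have h2 := (lBar_of_eqInt hj hj.choose_spec).1
          intro hc
          have hc' := le_iff_game_le.1 hc
          rw [hj.choose_spec, quot_intP] at hc'
          exact zsmul_one_not_le (by omega) hc'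
        · obtain ⟨i', hi'⟩ := ihAR j n hj hlt
          exact lf_of_le_mL hi'
      have main : ∀ (k : ℕ) (n : ℤ), n.toNat = k → n ≤ rBar (PGame.mk α β L R) →
          intP n ≤ PGame.mk α β L R := by
        intro k
        induction k with
        | zero =>
          intro n hk hn
          apply intP_le
          · intro j
            exact hRstep n j (by have := key j; omega)
          · intro h1
            exact absurd h1 (by omega)
        | succ k ihk =>
          intro n hk hn
          apply intP_le
          · intro j
            exact hRstep n j (by have := key j; omega)
          · intro h1
            intro hcon
            have h2 : intP (n - 1) ≤ PGame.mk α β L R := ihk (n - 1) (by omega) (by omega)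
            exact hInt ⟨n - 1, (quotEq hcon h2).trans (quot_intP _)⟩
      exact fun n hn => main n.toNat n rfl hn
  -- B' : lBar G ≤ n → G ≤ intP n
  have hB' : ∀ n : ℤ, lBar (PGame.mk α β L R) ≤ n → PGame.mk α β L R ≤ intP n := by
    by_cases hInt : EqInt (PGame.mk α β L R)
    · intro n hn
      have h1 := (lBar_of_eqInt hInt hInt.choose_spec).1
      rw [le_iff_game_le, quot_intP, hInt.choose_spec]
      exact zsmul_one_le (by omega)
    · have hlB := (lBar_of_not hInt).1
      have key : ∀ i : α, rBar (L i) + 1 ≤ lBar (PGame.mk α β L R) := by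
        intro i
        haveI : Nonempty α := ⟨i⟩
        have hfin : (Set.range fun i : α => rBar (L i) + 1).Finite := Set.finite_range _
        have hne : (Set.range fun i : α => rBar (L i) + 1).Nonempty :=
          Set.range_nonempty (fun i : α => rBar (L i) + 1)
        have hgr := isGreatest_zSup (exists_isGreatest_of_finite hfin hne)
        rw [hlB]
        exact hgr.2 ⟨i, rfl⟩
      have hLstep : ∀ (n : ℤ) (i : α), rBar (L i) < n → ¬ intP n ≤ L i := by
        intro n i hlt
        by_cases hi : EqInt (L i)
        · have h2 := (lBar_of_eqInt hi hi.choose_spec).2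
          intro hc
          have hc' := le_iff_game_le.1 hc
          rw [quot_intP, hi.choose_spec] at hc'
          exact zsmul_one_not_le (by omega) hc'
        · obtain ⟨j', hj'⟩ := ihA'L i n hi hlt
          exact lf_of_mR_le hj'
      have main : ∀ (k : ℕ) (n : ℤ), (-n).toNat = k → lBar (PGame.mk α β L R) ≤ n →
          PGame.mk α β L R ≤ intP n := by
        intro k
        induction k with
        | zero =>
          intro n hk hn
          apply le_intP
          · intro i
            exact hLstep n i (by have := key i; omega)
          · intro h1
            exact absurd h1 (by omega)
        | succ k ihk =>
          intro n hk hn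
          apply le_intP
          · intro i
            exact hLstep n i (by have := key i; omega)
          · intro h1
            intro hcon
            have h2 : PGame.mk α β L R ≤ intP (n + 1) := ihk (n + 1) (by omega) (by omega)
            exact hInt ⟨n + 1, (quotEq h2 hcon).trans (quot_intP _)⟩
      exact fun n hn => main (-n).toNat n rfl hn
  -- E : no left options → integer
  have hE : IsEmpty (PGame.mk α β L R).LeftMoves → EqInt (PGame.mk α β L R) := by
    intro hα
    by_cases hInt : EqInt (PGame.mk α β L R)
    · exact hInt
    rcases isEmpty_or_nonempty β with hβ | hβ
    · refine ⟨0, ?_⟩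
      show (⟦PGame.mk α β L R⟧ : Game) = 0
      have le1 : PGame.mk α β L R ≤ 0 :=
        le_iff_moves.2 ⟨fun i => (hα.elim i), fun j => PEmpty.elim j⟩
      have le2 : (0 : PGame) ≤ PGame.mk α β L R :=
        le_iff_moves.2 ⟨fun i => PEmpty.elim i, fun j => (hβ.elim j)⟩
      exact quotEq le1 le2
    · exfalso
      apply hInt
      have hrB := (lBar_of_not hInt).2
      have hfin : (Set.range fun j : β => lBar (R j) - 1).Finite := Set.finite_range _
      have hne : (Set.range fun j : β => lBar (R j) - 1).Nonempty :=
        Set.range_nonempty (fun j : β => lBar (R j) - 1)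
      have hleast := isLeast_zInf (exists_isLeast_of_finite hfin hne)
      set m := min 0 (rBar (PGame.mk α β L R)) with hm0
      have h1 : intP m ≤ PGame.mk α β L R := hB m (min_le_right _ _)
      have h2 : PGame.mk α β L R ≤ intP m := by
        rw [le_iff_moves]
        refine ⟨fun i => (hα.elim i), fun j => ?_⟩
        rcases le_or_gt 0 m with hm | hm
        · exact ((isEmpty_right_intP hm).elim j)
        · rw [intP_moveRight (by omega) j]
          intro hcon
          obtain ⟨j₀, hj₀⟩ := hleast.1
          have hmr : m = rBar (PGame.mk α β L R) := by omega
          have hlBj₀ : lBar (R j₀) = m + 1 := by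
            have : lBar (R j₀) - 1 = zInf (Set.range fun j : β => lBar (R j) - 1) := hj₀
            omega
          have hcon2 : ¬ R j₀ ≤ intP (m + 1) := (le_iff_moves.1 hcon).2 j₀
          exact hcon2 (ihB'R j₀ (m + 1) (by omega))
      exact ⟨m, (quotEq h2 h1).trans (quot_intP m)⟩
  -- E' : no right options → integer
  have hE' : IsEmpty (PGame.mk α β L R).RightMoves → EqInt (PGame.mk α β L R) := by
    intro hβ
    by_cases hInt : EqInt (PGame.mk α β L R)
    · exact hInt
    rcases isEmpty_or_nonempty α with hα | hα
    · refine ⟨0, ?_⟩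
      show (⟦PGame.mk α β L R⟧ : Game) = 0
      have le1 : PGame.mk α β L R ≤ 0 :=
        le_iff_moves.2 ⟨fun i => (hα.elim i), fun j => PEmpty.elim j⟩
      have le2 : (0 : PGame) ≤ PGame.mk α β L R :=
        le_iff_moves.2 ⟨fun i => PEmpty.elim i, fun j => (hβ.elim j)⟩
      exact quotEq le1 le2
    · exfalso
      apply hInt
      have hlB := (lBar_of_not hInt).1
      have hfin : (Set.range fun i : α => rBar (L i) + 1).Finite := Set.finite_range _
      have hne : (Set.range fun i : α => rBar (L i) + 1).Nonempty :=
        Set.range_nonempty (fun i : α => rBar (L i) + 1)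
      have hgr := isGreatest_zSup (exists_isGreatest_of_finite hfin hne)
      set m := max 0 (lBar (PGame.mk α β L R)) with hm0
      have h1 : PGame.mk α β L R ≤ intP m := hB' m (le_max_right _ _)
      have h2 : intP m ≤ PGame.mk α β L R := by
        rw [le_iff_moves]
        refine ⟨fun i => ?_, fun j => (hβ.elim j)⟩
        rcases le_or_gt m 0 with hm | hm
        · exact ((isEmpty_left_intP hm).elim i)
        · rw [intP_moveLeft (by omega) i]
          intro hcon
          obtain ⟨i₀, hi₀⟩ := hgr.1
          have hml : m = lBar (PGame.mk α β L R) := by omega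
          have hrBi₀ : rBar (L i₀) = m - 1 := by
            have : rBar (L i₀) + 1 = zSup (Set.range fun i : α => rBar (L i) + 1) := hi₀
            omega
          have hcon2 : ¬ intP (m - 1) ≤ L i₀ := (le_iff_moves.1 hcon).1 i₀
          exact hcon2 (ihBL i₀ (m - 1) (by omega))
      exact ⟨m, (quotEq h1 h2).trans (quot_intP m)⟩
  -- A and A'
  refine ⟨hB, hB', hE, hE', ?_, ?_⟩
  · intro n hInt hn
    rcases isEmpty_or_nonempty α with hα | hα
    · exact absurd (hE hα) hInt
    · have hlB := (lBar_of_not hInt).1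
      have hgr := isGreatest_zSup (exists_isGreatest_of_finite
        (Set.finite_range _) (Set.range_nonempty (fun i : α => rBar (L i) + 1)))
      obtain ⟨i₀, hi₀⟩ := hgr.1
      refine ⟨i₀, ihBL i₀ n ?_⟩
      have h3 : rBar (L i₀) + 1 = zSup (Set.range fun i : α => rBar (L i) + 1) := hi₀
      omega
  · intro n hInt hn
    rcases isEmpty_or_nonempty β with hβ | hβ
    · exact absurd (hE' hβ) hInt
    · have hrB := (lBar_of_not hInt).2
      have hleast := isLeast_zInf (exists_isLeast_of_finite
        (Set.finite_range _) (Set.range_nonempty (fun j : β => lBar (R j) - 1)))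
      obtain ⟨j₀, hj₀⟩ := hleast.1
      refine ⟨j₀, ihB'R j₀ n ?_⟩
      have h3 : lBar (R j₀) - 1 = zInf (Set.range fun j : β => lBar (R j) - 1) := hj₀
      omega


end Temper

open Temper in
/-- If `G` is short, not equal to an integer, and `n < λ̄(G)`, then some
Left option satisfies `n ≤ G^L`. -/
theorem exists_leftOption_ge_of_lt_lBar (G : PGame) [G.Short] (hG : ¬ EqInt G)
    (n : ℤ) (hn : n < lBar G) :
    ∃ i : G.LeftMoves, (n • (1 : Game)) ≤ (⟦G.moveLeft i⟧ : Game) := by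
  obtain ⟨i, hi⟩ := (bigP G ‹G.Short›).2.2.2.2.1 n hG hn
  refine ⟨i, ?_⟩
  rw [← quot_intP n]
  exact le_iff_game_le.1 hi
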